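/- arXiv:2208.14358 — 2 statements merged into one kernel-verified Lean document; each statement's English description precedes it below -/
import Mathlib

section
/- Let U K = −a K + R(q, p) where a = nγ > 0 and R(q, p) = −n‖p‖^{n−2}⟨∇V(q), p⟩ + nγ(n + d − 2)/β‖p‖^{n−2} + a, with ‖∇V‖ ≤ C bounded. Then R(q,p)/(1 + ‖p‖ⁿ) is bounded, and hence there exist constants â > 0 and b̂ ≥ 0 with U K_n ≤ −â K_n + b̂ where K_n(q,p) = 1 + ‖p‖^{n}. -/
/-!
With `t = ‖p‖`, the remainder `U K_n + nγ K_n` equals `-n t^(n-2) ⟪∇V q, p⟫ + D t^(n-2) + nγ`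
with `D = nγ(n+d-2)/β`, and Cauchy–Schwarz bounds it by `nC t^(n-1) + |D| t^(n-2) + nγ`:
a polynomial in `t` of degree below `n`. Each such power is at most `1 + tⁿ`, which bounds the
remainder relative to `K_n`; and for every `ε > 0` it is at most `ε tⁿ` plus a constant, so half
of the dissipation `-nγ tⁿ` absorbs it.
-/

open scoped RealInnerProductSpace

lemma pow_le_one_add_pow {t : ℝ} (ht : 0 ≤ t) {k n : ℕ} (hk : k ≤ n) : t ^ k ≤ 1 + t ^ n := by
  rcases le_total t 1 with h | h
  · linarith [pow_le_one₀ ht h (n := k), pow_nonneg ht n]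
  · linarith [pow_le_pow_right₀ h hk]

lemma exists_mul_pow_le_mul_pow_add (c : ℝ) {ε : ℝ} (hε : 0 < ε) {k n : ℕ} (hk : k < n) :
    ∃ M, 0 ≤ M ∧ ∀ t, 0 ≤ t → c * t ^ k ≤ ε * t ^ n + M := by
  set T := max 1 (|c| / ε)
  have hM : 0 ≤ |c| * T ^ k := by positivity
  refine ⟨|c| * T ^ k, hM, fun t ht => ?_⟩
  have hct : c * t ^ k ≤ |c| * t ^ k := mul_le_mul_of_nonneg_right (le_abs_self c) (by positivity)
  have hεn : 0 ≤ ε * t ^ n := by positivity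
  rcases le_total t T with h | h
  · nlinarith [pow_le_pow_left₀ ht h k, abs_nonneg c]
  · have h1 : 1 ≤ t := (le_max_left _ _).trans h
    have hc : |c| ≤ ε * t := (div_le_iff₀' hε).mp ((le_max_right _ _).trans h)
    have hkn : t ^ (k + 1) ≤ t ^ n := pow_le_pow_right₀ h1 hk
    have : |c| * t ^ k ≤ ε * t ^ n :=
      calc |c| * t ^ k ≤ ε * t * t ^ k := by gcongr
        _ = ε * t ^ (k + 1) := by ring
        _ ≤ ε * t ^ n := by gcongr
    linarith

section InnerProductSpace

variable {E : Type*} [NormedAddCommGroup E] [InnerProductSpace ℝ E]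

lemma abs_norm_pow_mul_inner_le (g p : E) (m : ℕ) :
    |‖p‖ ^ m * ⟪g, p⟫| ≤ ‖g‖ * ‖p‖ ^ (m + 1) := by
  rw [abs_mul, abs_of_nonneg (by positivity), pow_succ]
  nlinarith [abs_real_inner_le_norm g p, pow_nonneg (norm_nonneg p) m]

lemma abs_drift_remainder_le {n : ℕ} (hn : 2 ≤ n) {C : ℝ} (D a : ℝ) {g : E} (hg : ‖g‖ ≤ C)
    (p : E) :
    |-(n : ℝ) * ‖p‖ ^ (n - 2) * ⟪g, p⟫ + D * ‖p‖ ^ (n - 2) + a| ≤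
      n * C * ‖p‖ ^ (n - 1) + |D| * ‖p‖ ^ (n - 2) + |a| := by
  have hinner := abs_norm_pow_mul_inner_le g p (n - 2)
  rw [show n - 2 + 1 = n - 1 by omega] at hinner
  have hdrift : |-(n : ℝ) * ‖p‖ ^ (n - 2) * ⟪g, p⟫| ≤ n * C * ‖p‖ ^ (n - 1) := by
    rw [mul_assoc, abs_mul, abs_neg, Nat.abs_cast, mul_assoc]
    gcongr
    exact hinner.trans (by gcongr)
  calc _ ≤ |-(n : ℝ) * ‖p‖ ^ (n - 2) * ⟪g, p⟫| + |D * ‖p‖ ^ (n - 2)| + |a| := abs_add_three _ _ _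
    _ ≤ _ := by rw [abs_mul D, abs_of_nonneg (by positivity : 0 ≤ ‖p‖ ^ (n - 2))]; gcongr

end InnerProductSpace

theorem langevin_lyapunov_drift_general
    (d n : ℕ) (hn : 2 ≤ n) (γ β C : ℝ) (hγ : 0 < γ)
    (gradV : EuclideanSpace ℝ (Fin d) → EuclideanSpace ℝ (Fin d))
    (hbound : ∀ q, ‖gradV q‖ ≤ C)
    (UK : EuclideanSpace ℝ (Fin d) → EuclideanSpace ℝ (Fin d) → ℝ)
    (hUK : ∀ q p, UK q p =
      -(n : ℝ) * ‖p‖ ^ (n - 2) * ⟪gradV q, p⟫ - (n : ℝ) * γ * ‖p‖ ^ n +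
        (n : ℝ) * γ * ((n : ℝ) + (d : ℝ) - 2) / β * ‖p‖ ^ (n - 2)) :
    (∃ B : ℝ, ∀ q p, |UK q p + (n : ℝ) * γ * (1 + ‖p‖ ^ n)| / (1 + ‖p‖ ^ n) ≤ B) ∧
    (∃ ahat bhat : ℝ, 0 < ahat ∧ 0 ≤ bhat ∧
      ∀ q p, UK q p ≤ -ahat * (1 + ‖p‖ ^ n) + bhat) := by
  set D : ℝ := (n : ℝ) * γ * ((n : ℝ) + (d : ℝ) - 2) / β
  have hC : 0 ≤ C := (norm_nonneg _).trans (hbound 0)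
  have ha : 0 < (n : ℝ) * γ := mul_pos (by positivity) hγ
  have hR : ∀ q p, |UK q p + (n : ℝ) * γ * (1 + ‖p‖ ^ n)| ≤
      n * C * ‖p‖ ^ (n - 1) + |D| * ‖p‖ ^ (n - 2) + n * γ := fun q p => by
    have h := abs_drift_remainder_le hn D (n * γ) (hbound q) p
    rw [abs_of_pos ha] at h
    convert h using 2
    rw [hUK]
    ring
  refine ⟨⟨n * C + |D| + n * γ, fun q p => ?_⟩, ?_⟩
  · have ht := norm_nonneg p
    rw [div_le_iff₀ (by positivity)]
    have h1 := pow_le_one_add_pow ht (show n - 1 ≤ n by omega)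
    have h2 := pow_le_one_add_pow ht (show n - 2 ≤ n by omega)
    nlinarith [hR q p, mul_le_mul_of_nonneg_left h1 (by positivity : 0 ≤ n * C),
      mul_le_mul_of_nonneg_left h2 (abs_nonneg D), pow_nonneg ht n]
  · obtain ⟨M₁, hM₁, h₁⟩ := exists_mul_pow_le_mul_pow_add (n * C) (by positivity : 0 < n * γ / 4)
      (show n - 1 < n by omega)
    obtain ⟨M₂, hM₂, h₂⟩ := exists_mul_pow_le_mul_pow_add |D| (by positivity : 0 < n * γ / 4)
      (show n - 2 < n by omega)
    refine ⟨n * γ / 2, n * γ / 2 + M₁ + M₂, by positivity, by positivity, fun q p => ?_⟩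
    have ht := norm_nonneg p
    nlinarith [(abs_le.mp (hR q p)).2, h₁ _ ht, h₂ _ ht]

/-- Lyapunov drift inequality for `K_n(q,p) = 1 + ‖p‖ⁿ`: with bounded `∇V`, the remainder
`R = U K_n + a K_n` (with `a = nγ`) is bounded relative to `K_n`, and hence
`U K_n ≤ −â K_n + b̂`. -/
theorem langevin_lyapunov_drift
    (d n : ℕ) (hd : 1 ≤ d) (hn : 2 ≤ n) (γ β C : ℝ) (hγ : 0 < γ) (hβ : 0 < β) (hC : 0 ≤ C)
    (gradV : EuclideanSpace ℝ (Fin d) → EuclideanSpace ℝ (Fin d))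
    (hbound : ∀ q, ‖gradV q‖ ≤ C)
    (UK : EuclideanSpace ℝ (Fin d) → EuclideanSpace ℝ (Fin d) → ℝ)
    (hUK : ∀ q p, UK q p =
      -(n : ℝ) * ‖p‖ ^ (n - 2) * ⟪gradV q, p⟫ - (n : ℝ) * γ * ‖p‖ ^ n +
        (n : ℝ) * γ * ((n : ℝ) + (d : ℝ) - 2) / β * ‖p‖ ^ (n - 2)) :
    (∃ B : ℝ, ∀ q p, |UK q p + (n : ℝ) * γ * (1 + ‖p‖ ^ n)| / (1 + ‖p‖ ^ n) ≤ B) ∧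
    (∃ ahat bhat : ℝ, 0 < ahat ∧ 0 ≤ bhat ∧
      ∀ q p, UK q p ≤ -ahat * (1 + ‖p‖ ^ n) + bhat) :=
  langevin_lyapunov_drift_general d n hn γ β C hγ gradV hbound UK hUK
end

section
/- Suppose a Markov kernel P on a measurable space satisfies P(x, B) ≥ κ ϑ(B) for all x ∈ C and B, where κ ∈ (0, 1] and ϑ is a probability measure, and suppose a measurable V ≥ 1 satisfies PV ≤ aV + b with a ∈ [0,1), b ≥ 0, and the sublevel set {V ≤ R} ⊆ C for some R > 2b/(1 − a). Then P admits at most one invariant probability measure with finite V-moment, and any two such measures coincide. (Uniqueness part of Harris' theorem.) -/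
open MeasureTheory ProbabilityTheory
open scoped ENNReal NNReal


/-- Cancellation in `ℝ≥0∞`: from `a + b = c + d`, `a ≤ c`, `b ≤ d` and finiteness,
deduce `a = c`. -/
lemma harris_ennreal_cancel {a b c d : ℝ≥0∞} (hac : a ≤ c) (hbd : b ≤ d)
    (h : a + b = c + d) (hd : d ≠ ∞) : a = c := by
  have hb : b ≠ ∞ := by
    intro hbtop
    exact hd (top_le_iff.mp (hbtop ▸ hbd))
  refine le_antisymm hac ?_
  calc c = (c + d) - d := by rw [ENNReal.add_sub_cancel_right hd]
  _ = (a + b) - d := by rw [h]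
  _ ≤ (a + b) - b := tsub_le_tsub_left hbd _
  _ = a := ENNReal.add_sub_cancel_right hb

/-- The positive part (w.r.t. a Hahn set `S`) of the difference of two invariant
probability measures is again invariant. -/
lemma harris_invariant_sub_restrict {E : Type*} [MeasurableSpace E]
    (P : Kernel E E) [IsMarkovKernel P]
    (μ ν : Measure E) [IsProbabilityMeasure μ] [IsProbabilityMeasure ν]
    (hμ : Kernel.Invariant P μ) (hν : Kernel.Invariant P ν)
    (S : Set E) (hS : MeasurableSet S)
    (h1 : ∀ t, MeasurableSet t → t ⊆ S → ν t ≤ μ t)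
    (h2 : ∀ t, MeasurableSet t → t ⊆ Sᶜ → μ t ≤ ν t) :
    Kernel.Invariant P (μ.restrict S - ν.restrict S) := by
  set ρ : Measure E := μ.restrict S - ν.restrict S with hρdef
  have hle : ν.restrict S ≤ μ.restrict S := by
    rw [Measure.le_iff]
    intro s hs
    rw [Measure.restrict_apply hs, Measure.restrict_apply hs]
    exact h1 _ (hs.inter hS) Set.inter_subset_right
  have hle' : μ.restrict Sᶜ ≤ ν.restrict Sᶜ := by
    rw [Measure.le_iff]
    intro s hs
    rw [Measure.restrict_apply hs, Measure.restrict_apply hs]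
    exact h2 _ (hs.inter hS.compl) Set.inter_subset_right
  have hρle : ρ ≤ μ := Measure.sub_le.trans Measure.restrict_le_self
  haveI : IsFiniteMeasure ρ := isFiniteMeasure_of_le μ hρle
  have hsum : ρ + ν.restrict S = μ.restrict S := Measure.sub_add_cancel_of_le hle
  -- lintegrals over ρ
  have hlρ : ∀ f : E → ℝ≥0∞,
      ∫⁻ x, f x ∂(μ.restrict S) = ∫⁻ x, f x ∂ρ + ∫⁻ x, f x ∂(ν.restrict S) := by
    intro f
    rw [← hsum, lintegral_add_measure]
  -- finiteness of bounded lintegrals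
  have hbnd : ∀ (m : Measure E) [IsFiniteMeasure m] (A : Set E),
      ∫⁻ x, P x A ∂m ≠ ∞ := by
    intro m _ A
    refine ne_top_of_le_ne_top (measure_ne_top m Set.univ) ?_
    calc ∫⁻ x, P x A ∂m ≤ ∫⁻ _, 1 ∂m := lintegral_mono fun x => prob_le_one
    _ = m Set.univ := lintegral_one
  -- total masses agree
  have hmass : ρ.bind P Set.univ = ρ Set.univ := by
    rw [Measure.bind_apply MeasurableSet.univ P.measurable.aemeasurable]
    simp [measure_univ]
  -- pointwise inequality
  have hpt : ∀ B : Set E, MeasurableSet B → ρ B ≤ ρ.bind P B := by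
    intro B hB
    set A : Set E := B ∩ S with hAdef
    have hA : MeasurableSet A := hB.inter hS
    have hμA : μ A = ∫⁻ x, P x A ∂μ := by
      conv_lhs => rw [← hμ]
      rw [Measure.bind_apply hA P.measurable.aemeasurable]
    have hνA : ν A = ∫⁻ x, P x A ∂ν := by
      conv_lhs => rw [← hν]
      rw [Measure.bind_apply hA P.measurable.aemeasurable]
    have hρB : ρ B = μ A - ν A := by
      rw [hρdef, Measure.sub_apply hB hle, Measure.restrict_apply hB,
        Measure.restrict_apply hB]
    have hsplitμ : ∫⁻ x, P x A ∂μ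
        = ∫⁻ x, P x A ∂(μ.restrict S) + ∫⁻ x, P x A ∂(μ.restrict Sᶜ) :=
      (lintegral_add_compl _ hS).symm
    have hsplitν : ∫⁻ x, P x A ∂ν
        = ∫⁻ x, P x A ∂(ν.restrict S) + ∫⁻ x, P x A ∂(ν.restrict Sᶜ) :=
      (lintegral_add_compl _ hS).symm
    set pμ := ∫⁻ x, P x A ∂(μ.restrict S)
    set qμ := ∫⁻ x, P x A ∂(μ.restrict Sᶜ)
    set pν := ∫⁻ x, P x A ∂(ν.restrict S)
    set qν := ∫⁻ x, P x A ∂(ν.restrict Sᶜ)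
    have hq : qμ ≤ qν := lintegral_mono' hle' le_rfl
    have hpνfin : pν ≠ ∞ := hbnd _ _
    have step1 : ρ B ≤ pμ - pν := by
      rw [hρB, hμA, hνA, hsplitμ, hsplitν]
      rw [tsub_le_iff_right]
      calc pμ + qμ ≤ pμ + qν := add_le_add_right hq _
      _ ≤ ((pμ - pν) + pν) + qν := add_le_add le_tsub_add le_rfl
      _ = (pμ - pν) + (pν + qν) := by rw [add_assoc]
    have step2 : pμ - pν = ∫⁻ x, P x A ∂ρ := by
      have h := hlρ (fun x => P x A)
      rw [show pμ = ∫⁻ x, P x A ∂ρ + pν from h]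
      exact ENNReal.add_sub_cancel_right hpνfin
    calc ρ B ≤ pμ - pν := step1
    _ = ∫⁻ x, P x A ∂ρ := step2
    _ ≤ ∫⁻ x, P x B ∂ρ := lintegral_mono fun x => measure_mono Set.inter_subset_left
    _ = ρ.bind P B := (Measure.bind_apply hB P.measurable.aemeasurable).symm
  -- conclude equality
  refine Measure.ext fun B hB => ?_
  have h₁ : ρ B + ρ Bᶜ = ρ.bind P B + ρ.bind P Bᶜ := by
    rw [measure_add_measure_compl hB, measure_add_measure_compl hB, hmass]
  have hfin : ρ.bind P Bᶜ ≠ ∞ := by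
    refine ne_top_of_le_ne_top (measure_ne_top ρ Set.univ) ?_
    rw [← hmass]
    exact measure_mono (Set.subset_univ _)
  exact (harris_ennreal_cancel (hpt B hB) (hpt Bᶜ hB.compl) h₁ hfin).symm



/-- Any invariant probability measure with finite `V`-moment charges every set that
`ϑ` charges: drift + minorization imply `η ≥ (κ/2) ϑ` in effect. -/
lemma harris_theta_null {E : Type*} [MeasurableSpace E]
    (P : Kernel E E) [IsMarkovKernel P]
    (V : E → ℝ) (hVmeas : Measurable V) (hVnn : ∀ x, 0 ≤ V x)
    (a b : ℝ) (ha : a ∈ Set.Ico (0:ℝ) 1) (hb : 0 ≤ b)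
    (hdrift : ∀ x, (∫ y, V y ∂(P x)) ≤ a * V x + b)
    (hVint : ∀ x, Integrable V (P x))
    (C : Set E) (R : ℝ) (hR : 2 * b / (1 - a) < R)
    (hsub : {x | V x ≤ R} ⊆ C)
    (κ : ℝ) (hκpos : 0 < κ)
    (ϑ : Measure E) [IsProbabilityMeasure ϑ]
    (hminor : ∀ x ∈ C, ∀ B : Set E, MeasurableSet B →
      ENNReal.ofReal κ * ϑ B ≤ P x B)
    (η : Measure E) [IsProbabilityMeasure η] (hinv : Kernel.Invariant P η)
    (hfin : ∫⁻ x, ENNReal.ofReal (V x) ∂η ≠ ∞)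
    {B : Set E} (hB : MeasurableSet B) (hB0 : η B = 0) : ϑ B = 0 := by
  have h1a : 0 < 1 - a := by linarith [ha.2]
  have hRpos : 0 < R := lt_of_le_of_lt (by positivity) hR
  set W : E → ℝ≥0∞ := fun x => ENNReal.ofReal (V x) with hWdef
  have hW : Measurable W := hVmeas.ennreal_ofReal
  set I : ℝ≥0∞ := ∫⁻ x, W x ∂η with hIdef
  -- moment bound
  have key : I ≤ ENNReal.ofReal a * I + ENNReal.ofReal b := by
    have hI2 : I = ∫⁻ x, ∫⁻ y, W y ∂(P x) ∂η := by
      conv_lhs => rw [hIdef]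
      rw [← hinv.def, Measure.lintegral_bind P.measurable.aemeasurable hW.aemeasurable, hinv.def]
    calc I = ∫⁻ x, ∫⁻ y, W y ∂(P x) ∂η := hI2
    _ ≤ ∫⁻ x, (ENNReal.ofReal a * W x + ENNReal.ofReal b) ∂η := by
          refine lintegral_mono fun x => ?_
          have e1 : ∫⁻ y, W y ∂(P x) = ENNReal.ofReal (∫ y, V y ∂(P x)) :=
            (ofReal_integral_eq_lintegral_ofReal (hVint x) (ae_of_all _ hVnn)).symm
          rw [e1]
          calc ENNReal.ofReal (∫ y, V y ∂(P x))
              ≤ ENNReal.ofReal (a * V x + b) := ENNReal.ofReal_le_ofReal (hdrift x)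
          _ = ENNReal.ofReal a * W x + ENNReal.ofReal b := by
              rw [ENNReal.ofReal_add (mul_nonneg ha.1 (hVnn x)) hb,
                ENNReal.ofReal_mul ha.1]
    _ = ENNReal.ofReal a * I + ENNReal.ofReal b := by
        rw [lintegral_add_right _ measurable_const, lintegral_const, measure_univ,
          mul_one, lintegral_const_mul _ hW]
  have hIle : I ≤ ENNReal.ofReal (b / (1 - a)) := by
    set r : ℝ := I.toReal with hrdef
    have hrhs_fin : ENNReal.ofReal a * I + ENNReal.ofReal b ≠ ∞ := by
      refine ENNReal.add_ne_top.mpr ⟨ENNReal.mul_ne_top ENNReal.ofReal_ne_top hfin, ENNReal.ofReal_ne_top⟩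
    have hr : r ≤ a * r + b := by
      have := ENNReal.toReal_mono hrhs_fin key
      rwa [ENNReal.toReal_add (ENNReal.mul_ne_top ENNReal.ofReal_ne_top hfin)
        ENNReal.ofReal_ne_top, ENNReal.toReal_mul, ENNReal.toReal_ofReal ha.1,
        ENNReal.toReal_ofReal hb] at this
    have hrle : r ≤ b / (1 - a) := by
      rw [le_div_iff₀ h1a]; nlinarith
    calc I = ENNReal.ofReal r := (ENNReal.ofReal_toReal hfin).symm
    _ ≤ ENNReal.ofReal (b / (1 - a)) := ENNReal.ofReal_le_ofReal hrle
  -- Markov inequality: small tail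
  have htail : η {x | V x ≤ R}ᶜ < 2⁻¹ := by
    have hss : {x | V x ≤ R}ᶜ ⊆ {x | ENNReal.ofReal R ≤ W x} := by
      intro x hx
      exact ENNReal.ofReal_le_ofReal (le_of_lt (not_le.mp hx))
    have hmarkov : η {x | ENNReal.ofReal R ≤ W x} ≤ I / ENNReal.ofReal R :=
      meas_ge_le_lintegral_div hW.aemeasurable
        (by simpa using (ENNReal.ofReal_pos.mpr hRpos).ne') ENNReal.ofReal_ne_top
    have hlt : ENNReal.ofReal (b / (1 - a)) / ENNReal.ofReal R < 2⁻¹ := by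
      rw [← ENNReal.ofReal_div_of_pos hRpos]
      have hreal : b / (1 - a) / R < 1 / 2 := by
        have h2 : 2 * b < R * (1 - a) := by
          have := (div_lt_iff₀ h1a).mp hR
          linarith
        rw [div_lt_iff₀ hRpos, div_lt_iff₀ h1a]
        nlinarith
      calc ENNReal.ofReal (b / (1 - a) / R) < ENNReal.ofReal (1 / 2) :=
            (ENNReal.ofReal_lt_ofReal_iff (by norm_num)).mpr hreal
      _ = 2⁻¹ := by
            rw [ENNReal.ofReal_div_of_pos (by norm_num)]
            simp [ENNReal.div_eq_inv_mul]
    calc η {x | V x ≤ R}ᶜ ≤ I / ENNReal.ofReal R :=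
          le_trans (measure_mono hss) hmarkov
    _ ≤ ENNReal.ofReal (b / (1 - a)) / ENNReal.ofReal R :=
          ENNReal.div_le_div_right hIle _
    _ < 2⁻¹ := hlt
  -- η C > 1/2
  have hCbig : (2:ℝ≥0∞)⁻¹ < η C := by
    have hmeasV : MeasurableSet {x | V x ≤ R} := measurableSet_le hVmeas measurable_const
    by_contra hcon
    push_neg at hcon
    have hVC : η {x | V x ≤ R} ≤ 2⁻¹ :=
      le_trans (measure_mono hsub) hcon
    have : (1:ℝ≥0∞) < 1 := by
      calc (1:ℝ≥0∞) = η {x | V x ≤ R} + η {x | V x ≤ R}ᶜ := by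
            rw [measure_add_measure_compl hmeasV, measure_univ]
      _ < 2⁻¹ + 2⁻¹ :=
            ENNReal.add_lt_add_of_le_of_lt (ne_top_of_le_ne_top (by norm_num) hVC)
              hVC htail
      _ = 1 := by rw [ENNReal.inv_two_add_inv_two]
    exact absurd this (lt_irrefl _)
  -- minorization through C
  have hdom : ENNReal.ofReal κ * ϑ B * η C ≤ η B := by
    conv_rhs => rw [← hinv.def]
    rw [Measure.bind_apply hB P.measurable.aemeasurable]
    calc ENNReal.ofReal κ * ϑ B * η C = ∫⁻ _ in C, ENNReal.ofReal κ * ϑ B ∂η := by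
          rw [setLIntegral_const]
    _ ≤ ∫⁻ x in C, P x B ∂η :=
          setLIntegral_mono (P.measurable_coe hB) fun x hx => hminor x hx B hB
    _ ≤ ∫⁻ x, P x B ∂η := setLIntegral_le_lintegral _ _
  rw [hB0] at hdom
  have := le_antisymm hdom zero_le
  rcases mul_eq_zero.mp this with h | h
  · rcases mul_eq_zero.mp h with h' | h'
    · exact absurd h' (ENNReal.ofReal_pos.mpr hκpos).ne'
    · exact h'
  · exact absurd h ((by norm_num : (0:ℝ≥0∞) < 2⁻¹).trans hCbig).ne'


/-- Uniqueness part of Harris' theorem (Hairer–Mattingly framework): a Markov kernel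
satisfying a Lyapunov drift condition and a minorization on a sufficiently large sublevel
set of the Lyapunov function has at most one invariant probability measure with finite
`V`-moment. -/
theorem harris_uniqueness
    {E : Type*} [MeasurableSpace E]
    (P : Kernel E E) [IsMarkovKernel P]
    (V : E → ℝ) (hVmeas : Measurable V) (hV1 : ∀ x, 1 ≤ V x)
    (a b : ℝ) (ha : a ∈ Set.Ico (0:ℝ) 1) (hb : 0 ≤ b)
    (hdrift : ∀ x, (∫ y, V y ∂(P x)) ≤ a * V x + b)
    (hVint : ∀ x, Integrable V (P x))
    (C : Set E) (hCmeas : MeasurableSet C)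
    (R : ℝ) (hR : 2 * b / (1 - a) < R)
    (hsub : {x | V x ≤ R} ⊆ C)
    (κ : ℝ) (hκ : κ ∈ Set.Ioc (0:ℝ) 1)
    (ϑ : Measure E) [IsProbabilityMeasure ϑ]
    (hminor : ∀ x ∈ C, ∀ B : Set E, MeasurableSet B →
      ENNReal.ofReal κ * ϑ B ≤ P x B) :
    ∀ μ ν : Measure E, IsProbabilityMeasure μ → IsProbabilityMeasure ν →
      Kernel.Invariant P μ → Kernel.Invariant P ν →
      Integrable V μ → Integrable V ν → μ = ν := by
  intro μ ν hμp hνp hμinv hνinv hμV hνV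
  haveI := hμp; haveI := hνp
  have hVnn : ∀ x, 0 ≤ V x := fun x => le_trans zero_le_one (hV1 x)
  by_contra hne
  obtain ⟨S, hS, h1, h2⟩ := hahn_decomposition (μ := μ) (ν := ν)
  -- ν S < μ S, else μ = ν
  have hSlt : ν S < μ S := by
    rcases lt_or_ge (ν S) (μ S) with h | h
    · exact h
    · exfalso; apply hne
      have hSeq : μ S = ν S := le_antisymm h (h1 S hS le_rfl)
      have hSceq : μ Sᶜ = ν Sᶜ := by
        rw [measure_compl hS (measure_ne_top μ S), measure_compl hS (measure_ne_top ν S),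
          measure_univ, measure_univ, hSeq]
      refine Measure.ext fun B hB => ?_
      have e1 : ν (S ∩ B) = μ (S ∩ B) := by
        refine harris_ennreal_cancel (h1 _ (hS.inter hB) Set.inter_subset_left)
          (h1 _ (hS.diff hB) Set.diff_subset) ?_ (measure_ne_top μ _)
        rw [measure_inter_add_diff S hB, measure_inter_add_diff S hB, hSeq]
      have e2 : μ (Sᶜ ∩ B) = ν (Sᶜ ∩ B) := by
        refine harris_ennreal_cancel (h2 _ (hS.compl.inter hB) Set.inter_subset_left)
          (h2 _ (hS.compl.diff hB) Set.diff_subset) ?_ (measure_ne_top ν _)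
        rw [measure_inter_add_diff Sᶜ hB, measure_inter_add_diff Sᶜ hB, hSceq]
      calc μ B = μ (B ∩ S) + μ (B \ S) := (measure_inter_add_diff B hS).symm
      _ = ν (B ∩ S) + ν (B \ S) := by
          rw [Set.inter_comm B S, Set.diff_eq, Set.inter_comm B Sᶜ, ← e1, e2]
      _ = ν B := measure_inter_add_diff B hS
  have hSclt : μ Sᶜ < ν Sᶜ := by
    by_contra hcon
    push_neg at hcon
    have : (1:ℝ≥0∞) < 1 := by
      calc (1:ℝ≥0∞) = ν S + ν Sᶜ := by rw [measure_add_measure_compl hS, measure_univ]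
      _ < μ S + μ Sᶜ := ENNReal.add_lt_add_of_lt_of_le (measure_ne_top ν Sᶜ) hSlt hcon
      _ = 1 := by rw [measure_add_measure_compl hS, measure_univ]
    exact absurd this (lt_irrefl _)
  -- the two parts of the Hahn decomposition of μ - ν
  set ρp : Measure E := μ.restrict S - ν.restrict S with hρpdef
  set ρm : Measure E := ν.restrict Sᶜ - μ.restrict Sᶜ with hρmdef
  have hρpinv : Kernel.Invariant P ρp :=
    harris_invariant_sub_restrict P μ ν hμinv hνinv S hS h1 h2
  have hρminv : Kernel.Invariant P ρm :=
    harris_invariant_sub_restrict P ν μ hνinv hμinv Sᶜ hS.compl h2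
      (fun t ht hts => h1 t ht (by rwa [compl_compl] at hts))
  have hlep : ν.restrict S ≤ μ.restrict S := by
    rw [Measure.le_iff]
    intro s hs
    rw [Measure.restrict_apply hs, Measure.restrict_apply hs]
    exact h1 _ (hs.inter hS) Set.inter_subset_right
  have hlem : μ.restrict Sᶜ ≤ ν.restrict Sᶜ := by
    rw [Measure.le_iff]
    intro s hs
    rw [Measure.restrict_apply hs, Measure.restrict_apply hs]
    exact h2 _ (hs.inter hS.compl) Set.inter_subset_right
  have hρple : ρp ≤ μ := Measure.sub_le.trans Measure.restrict_le_self
  have hρmle : ρm ≤ ν := Measure.sub_le.trans Measure.restrict_le_self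
  -- total masses are positive and finite
  have htp : ρp Set.univ = μ S - ν S := by
    rw [hρpdef, Measure.sub_apply MeasurableSet.univ hlep,
      Measure.restrict_apply_univ, Measure.restrict_apply_univ]
  have htm : ρm Set.univ = ν Sᶜ - μ Sᶜ := by
    rw [hρmdef, Measure.sub_apply MeasurableSet.univ hlem,
      Measure.restrict_apply_univ, Measure.restrict_apply_univ]
  have htp0 : ρp Set.univ ≠ 0 := by
    rw [htp]; exact (tsub_pos_iff_lt.mpr hSlt).ne'
  have htm0 : ρm Set.univ ≠ 0 := by
    rw [htm]; exact (tsub_pos_iff_lt.mpr hSclt).ne'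
  have htptop : ρp Set.univ ≠ ∞ :=
    ne_top_of_le_ne_top (measure_ne_top μ Set.univ) (Measure.le_iff'.mp hρple Set.univ)
  have htmtop : ρm Set.univ ≠ ∞ :=
    ne_top_of_le_ne_top (measure_ne_top ν Set.univ) (Measure.le_iff'.mp hρmle Set.univ)
  -- normalized measures
  set μ' : Measure E := (ρp Set.univ)⁻¹ • ρp with hμ'def
  set ν' : Measure E := (ρm Set.univ)⁻¹ • ρm with hν'def
  haveI hμ'prob : IsProbabilityMeasure μ' :=
    ⟨by rw [hμ'def, Measure.smul_apply, smul_eq_mul, ENNReal.inv_mul_cancel htp0 htptop]⟩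
  haveI hν'prob : IsProbabilityMeasure ν' :=
    ⟨by rw [hν'def, Measure.smul_apply, smul_eq_mul, ENNReal.inv_mul_cancel htm0 htmtop]⟩
  have hμ'inv : Kernel.Invariant P μ' := by
    show μ'.bind P = μ'
    rw [hμ'def, Measure.bind_smul, hρpinv.def]
  have hν'inv : Kernel.Invariant P ν' := by
    show ν'.bind P = ν'
    rw [hν'def, Measure.bind_smul, hρminv.def]
  -- finite V-moments
  have hμ'fin : ∫⁻ x, ENNReal.ofReal (V x) ∂μ' ≠ ∞ := by
    rw [hμ'def, lintegral_smul_measure]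
    exact ENNReal.mul_ne_top (ENNReal.inv_ne_top.mpr htp0)
      (ne_top_of_le_ne_top (Integrable.lintegral_lt_top hμV).ne
        (lintegral_mono' hρple le_rfl))
  have hν'fin : ∫⁻ x, ENNReal.ofReal (V x) ∂ν' ≠ ∞ := by
    rw [hν'def, lintegral_smul_measure]
    exact ENNReal.mul_ne_top (ENNReal.inv_ne_top.mpr htm0)
      (ne_top_of_le_ne_top (Integrable.lintegral_lt_top hνV).ne
        (lintegral_mono' hρmle le_rfl))
  -- μ' lives on S, ν' lives on Sᶜ
  have hμ'Sc : μ' Sᶜ = 0 := by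
    have : ρp Sᶜ = 0 := by
      have hle0 : ρp Sᶜ ≤ μ.restrict S Sᶜ := Measure.le_iff'.mp Measure.sub_le Sᶜ
      rw [Measure.restrict_apply hS.compl, Set.compl_inter_self] at hle0
      simpa using hle0
    rw [hμ'def, Measure.smul_apply, smul_eq_mul, this, mul_zero]
  have hν'S : ν' S = 0 := by
    have : ρm S = 0 := by
      have hle0 : ρm S ≤ ν.restrict Sᶜ S := Measure.le_iff'.mp Measure.sub_le S
      rw [Measure.restrict_apply hS] at hle0
      simp only [Set.inter_compl_self, measure_empty] at hle0
      simpa using hle0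
    rw [hν'def, Measure.smul_apply, smul_eq_mul, this, mul_zero]
  -- ϑ vanishes on both S and Sᶜ: contradiction
  have hϑSc : ϑ Sᶜ = 0 :=
    harris_theta_null P V hVmeas hVnn a b ha hb hdrift hVint C R hR hsub κ hκ.1
      ϑ hminor μ' hμ'inv hμ'fin hS.compl hμ'Sc
  have hϑS : ϑ S = 0 :=
    harris_theta_null P V hVmeas hVnn a b ha hb hdrift hVint C R hR hsub κ hκ.1
      ϑ hminor ν' hν'inv hν'fin hS hν'S
  have : (1:ℝ≥0∞) ≤ 0 := by
    calc (1:ℝ≥0∞) = ϑ Set.univ := measure_univ.symm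
    _ = ϑ (S ∪ Sᶜ) := by rw [Set.union_compl_self]
    _ ≤ ϑ S + ϑ Sᶜ := measure_union_le _ _
    _ = 0 := by rw [hϑS, hϑSc, add_zero]
  simp at this
end
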